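/- For every odd integer n ≥ 3, the edge-locating chromatic number of the complete graph K_n equals n. -/

import Mathlib

open SimpleGraph

/-- Distance from a vertex to an edge: the minimum of the distances to the two endpoints. -/
noncomputable def edgeDist {V : Type*} (G : SimpleGraph V) (v : V) (e : Sym2 V) : ℕ :=
  Sym2.lift ⟨fun x y => min (G.dist v x) (G.dist v y), fun _ _ => min_comm _ _⟩ e

/-- Distance (in `ℕ∞`) from a vertex to the `i`-th color class of an edge coloring `c`
(it is `⊤` if the class is empty). -/
noncomputable def classDist {V : Type*} (G : SimpleGraph V) {k : ℕ} (c : Sym2 V → Fin k)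
    (v : V) (i : Fin k) : ℕ∞ :=
  ⨅ e ∈ {e | e ∈ G.edgeSet ∧ c e = i}, (edgeDist G v e : ℕ∞)

/-- `c` is an edge-locating `k`-coloring of `G`: it is a proper edge coloring (distinct edges
sharing an endpoint get different colors), and distinct vertices have distinct edge color codes
`(d(v, C_1), …, d(v, C_k))`. -/
def IsEdgeLocatingColoring {V : Type*} (G : SimpleGraph V) {k : ℕ} (c : Sym2 V → Fin k) : Prop :=
  (∀ e ∈ G.edgeSet, ∀ f ∈ G.edgeSet, e ≠ f → (∃ x, x ∈ e ∧ x ∈ f) → c e ≠ c f) ∧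
  (∀ u v : V, u ≠ v → ∃ i, classDist G c u i ≠ classDist G c v i)

/-- The edge-locating chromatic number `χ'_L(G)`: the least `k` such that `G` admits an
edge-locating `k`-coloring. -/
noncomputable def edgeLocatingChromaticNumber {V : Type*} (G : SimpleGraph V) : ℕ :=
  sInf {k | ∃ c : Sym2 V → Fin k, IsEdgeLocatingColoring G c}

/-- The join `G + H` of two graphs: all edges of `G`, all edges of `H`, and all edges between
a vertex of `G` and a vertex of `H`. -/
def graphJoin {α β : Type*} (G : SimpleGraph α) (H : SimpleGraph β) : SimpleGraph (α ⊕ β) :=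
  SimpleGraph.fromRel (fun x y =>
    (∃ a b, x = Sum.inl a ∧ y = Sum.inl b ∧ G.Adj a b) ∨
    (∃ a b, x = Sum.inr a ∧ y = Sum.inr b ∧ H.Adj a b) ∨
    (∃ a b, x = Sum.inl a ∧ y = Sum.inr b))

/-- A set `M` of edges of `G` forming a matching: pairwise vertex-disjoint edges of `G`. -/
def IsMatchingSet {V : Type*} (G : SimpleGraph V) (M : Set (Sym2 V)) : Prop :=
  M ⊆ G.edgeSet ∧ ∀ e ∈ M, ∀ f ∈ M, e ≠ f → ∀ x, x ∈ e → x ∉ f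

-- AUX

lemma modaux (n a : ℕ) (ha : a < n) : (a+a)%n = if a+a<n then a+a else a+a-n := by
  split
  · exact Nat.mod_eq_of_lt ‹_›
  · rw [Nat.mod_eq_sub_mod (by omega), Nat.mod_eq_of_lt (by omega)]

section Upper
variable (n : ℕ) (hn : 3 ≤ n) [NeZero n]

lemma double_inj (hn : 3 ≤ n) (hodd : Odd n) {u v : Fin n} (h : u + u = v + v) : u = v := by
  obtain ⟨m, hm⟩ := hodd
  have h' : (u.val + u.val) % n = (v.val + v.val) % n := by
    have := congrArg Fin.val h
    rwa [Fin.val_add, Fin.val_add] at this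
  rw [modaux n u.val u.isLt, modaux n v.val v.isLt] at h'
  have := u.isLt; have := v.isLt
  apply Fin.ext
  split at h' <;> split at h' <;> omega

lemma dist_top {v a : Fin n} (h : v ≠ a) : (⊤ : SimpleGraph (Fin n)).dist v a = 1 := by
  rw [SimpleGraph.dist_eq_one_iff_adj]; exact h

/-- the coloring -/
noncomputable def col : Sym2 (Fin n) → Fin n :=
  Sym2.lift ⟨fun x y => x + y, fun x y => add_comm x y⟩

@[simp] lemma col_mk (a b : Fin n) : col n s(a, b) = a + b := rfl

lemma edgeDist_mk (G : SimpleGraph (Fin n)) (v a b : Fin n) :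
    edgeDist G v s(a, b) = min (G.dist v a) (G.dist v b) := rfl

lemma classDist_top (hn : 3 ≤ n) (v i : Fin n) :
    classDist (⊤ : SimpleGraph (Fin n)) (col n) v i = if i = v + v then 1 else 0 := by
  have hv1 : ((1 : Fin n)).val = 1 := by
    rw [Fin.val_one']; exact Nat.mod_eq_of_lt (by omega)
  have hone : (1 : Fin n) ≠ 0 := by
    intro h; have := congrArg Fin.val h; rw [hv1, Fin.val_zero] at this; omega
  have htwo : (1 : Fin n) + 1 ≠ 0 := by
    intro h; have := congrArg Fin.val h
    rw [Fin.val_add, hv1, Fin.val_zero, Nat.mod_eq_of_lt (by omega)] at this; omega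
  split
  · -- i = v + v : all edges of the class avoid v, and the class is nonempty
    rename_i hi
    apply le_antisymm
    · -- witness s(v+1, v-1)
      have hab : v + 1 ≠ v - 1 := by
        intro h
        apply htwo
        have : v + (1 + 1) = v + 0 := by
          rw [← add_assoc, h]; abel
        exact add_left_cancel this
      have ha : v + 1 ≠ v := by
        intro h; exact hone (by simpa using (add_left_cancel (by rw [h, add_zero]) : (1:Fin n) = 0))
      have hb : v - 1 ≠ v := by
        intro h; apply hone; have := sub_eq_self.mp h; exact this
      have hmem : s(v+1, v-1) ∈ {e | e ∈ (⊤ : SimpleGraph (Fin n)).edgeSet ∧ col n e = i} := by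
        constructor
        · exact hab
        · rw [col_mk, hi]; abel
      refine le_trans (iInf₂_le _ hmem) ?_
      rw [edgeDist_mk, dist_top n ha.symm, dist_top n hb.symm]
      simp
    · -- lower bound 1
      refine le_iInf₂ fun e he => ?_
      induction e using Sym2.ind with
      | _ a b =>
        obtain ⟨hadj, hcol⟩ := he
        have hab : a ≠ b := hadj
        rw [col_mk] at hcol
        have ha : a ≠ v := by
          intro h; subst h
          exact hab (add_left_cancel (by rw [hcol, hi]))
        have hb : b ≠ v := by
          intro h; subst h
          apply hab
          have : b + a = b + b := by rw [add_comm] at hcol; rw [hcol, hi]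
          exact add_left_cancel this
        rw [edgeDist_mk, dist_top n (Ne.symm ha), dist_top n (Ne.symm hb)]
        simp
  · -- i ≠ v + v : edge s(v, i - v) is in the class and touches v
    rename_i hi
    have hw : i - v ≠ v := fun h => hi (sub_eq_iff_eq_add.mp h)
    have hmem : s(v, i - v) ∈ {e | e ∈ (⊤ : SimpleGraph (Fin n)).edgeSet ∧ col n e = i} := by
      constructor
      · exact Ne.symm hw
      · rw [col_mk]; abel
    refine le_antisymm (le_trans (iInf₂_le _ hmem) ?_) (by simp)
    rw [edgeDist_mk, SimpleGraph.dist_self]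
    simp

end Upper

lemma upper_mem (n : ℕ) (hn : 3 ≤ n) (hodd : Odd n) :
    n ∈ {k | ∃ c : Sym2 (Fin n) → Fin k, IsEdgeLocatingColoring (⊤ : SimpleGraph (Fin n)) c} := by
  haveI : NeZero n := ⟨by omega⟩
  refine ⟨col n, ?_, ?_⟩
  · -- proper
    intro e he f hf hef ⟨x, hxe, hxf⟩
    have hb := Sym2.other_spec hxe
    have hd := Sym2.other_spec hxf
    rw [← hb, ← hd, col_mk, col_mk]
    intro h
    have := add_left_cancel h
    apply hef
    rw [← hb, ← hd, this]
  · -- locating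
    intro u v huv
    refine ⟨u + u, ?_⟩
    rw [classDist_top n hn, classDist_top n hn, if_pos rfl,
      if_neg (fun h => huv (double_inj n hn hodd h))]
    simp

lemma matching_card (n : ℕ) (hn : 3 ≤ n) (hodd : Odd n) {k : ℕ}
    (c : Sym2 (Fin n) → Fin k)
    (hc : IsEdgeLocatingColoring (⊤ : SimpleGraph (Fin n)) c) : n ≤ k := by
  obtain ⟨m, hm⟩ := hodd
  classical
  set E := (⊤ : SimpleGraph (Fin n)).edgeFinset with hE
  set M : Fin k → Finset (Sym2 (Fin n)) := fun i => E.filter (fun e => c e = i) with hM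
  -- each e ∈ E has vertex set of card 2
  have hvert : ∀ e ∈ E, (Finset.univ.filter (· ∈ e)).card = 2 := by
    intro e he
    induction e using Sym2.ind with
    | _ a b =>
      have hab : a ≠ b := by
        rw [hE, SimpleGraph.mem_edgeFinset] at he; exact he
      have : Finset.univ.filter (· ∈ s(a,b)) = {a, b} := by
        ext x; simp [Sym2.mem_iff]
      rw [this, Finset.card_insert_of_notMem (by simp [hab]), Finset.card_singleton]
  -- matching bound
  have hMcard : ∀ i, (M i).card ≤ m := by
    intro i
    have hdisj : ∀ e ∈ M i, ∀ f ∈ M i, e ≠ f →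
        Disjoint (Finset.univ.filter (· ∈ e)) (Finset.univ.filter (· ∈ f)) := by
      intro e he f hf hef
      rw [hM, Finset.mem_filter, hE, SimpleGraph.mem_edgeFinset] at he hf
      rw [Finset.disjoint_left]
      intro x hxe hxf
      simp only [Finset.mem_filter] at hxe hxf
      exact hc.1 e he.1 f hf.1 hef ⟨x, hxe.2, hxf.2⟩ (he.2.trans hf.2.symm)
    have h2 : 2 * (M i).card ≤ n := by
      have := Finset.card_biUnion hdisj
      have hsum : ∑ e ∈ M i, (Finset.univ.filter (· ∈ e)).card = 2 * (M i).card := by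
        rw [Finset.sum_congr rfl (fun e he => hvert e (Finset.mem_filter.mp he).1)]
        simp [mul_comm]; rfl
      calc 2 * (M i).card = ((M i).biUnion (fun e => Finset.univ.filter (· ∈ e))).card := by
            rw [this, hsum]
        _ ≤ (Finset.univ : Finset (Fin n)).card := Finset.card_le_card (Finset.subset_univ _)
        _ = n := by simp
    omega
  -- partition count
  have hpart : E = Finset.univ.biUnion M := by
    ext e
    simp only [Finset.mem_biUnion, hM, Finset.mem_filter]
    constructor
    · intro he; exact ⟨c e, Finset.mem_univ _, he, rfl⟩
    · rintro ⟨i, _, he, _⟩; exact he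
  have hdisjM : ∀ i ∈ (Finset.univ : Finset (Fin k)), ∀ j ∈ Finset.univ, i ≠ j →
      Disjoint (M i) (M j) := by
    intro i _ j _ hij
    rw [Finset.disjoint_left]
    intro e hei hej
    rw [hM, Finset.mem_filter] at hei hej
    exact hij (hei.2 ▸ hej.2 ▸ rfl)
  have hcardE : E.card = n.choose 2 := by
    rw [hE]
    simpa using SimpleGraph.card_edgeFinset_top_eq_card_choose_two (V := Fin n)
  have hchoose : n.choose 2 = (2*m+1) * m := by
    have h1 : n - 1 = 2*m := by omega
    rw [Nat.choose_two_right, h1, hm]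
    have h2 : (2*m+1)*(2*m) = ((2*m+1)*m)*2 := by ring
    omega
  have : (2*m+1) * m ≤ k * m := by
    calc (2*m+1) * m = E.card := by rw [hcardE, hchoose]
      _ = ∑ i, (M i).card := by rw [hpart, Finset.card_biUnion hdisjM]
      _ ≤ ∑ _i : Fin k, m := Finset.sum_le_sum (fun i _ => hMcard i)
      _ = k * m := by simp [mul_comm]
  have hm1 : 1 ≤ m := by omega
  have := Nat.le_of_mul_le_mul_right this hm1
  omega

/-- For every odd integer `n ≥ 3`, the edge-locating chromatic number of `K_n` is `n`. -/
theorem stmt_8 (n : ℕ) (hn : 3 ≤ n) (hodd : Odd n) :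
    edgeLocatingChromaticNumber (⊤ : SimpleGraph (Fin n)) = n := by
  unfold edgeLocatingChromaticNumber
  refine le_antisymm (Nat.sInf_le (upper_mem n hn hodd)) ?_
  refine le_csInf ⟨n, upper_mem n hn hodd⟩ ?_
  rintro k ⟨c, hc⟩
  exact matching_card n hn hodd c hc
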